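/- arXiv:2312.01299 — 2 statements merged into one kernel-verified Lean document; each statement's English description precedes it below -/
import Mathlib

section
/- Let d ≥ 1, σ > 0, B ≥ 1, let θ_1, …, θ_B ∈ ℝ^d, and let c_1, …, c_B > 0 be positive weights. Define K_σ(x) = (1/σ)·exp(−‖x‖²/(2σ)), f(θ) = (1/B) Σ_{i=1}^B K_σ(θ − θ_i), and the weighted (conditional) estimate g(θ) = Σ_{i=1}^B c_i K_σ(θ − θ_i) / Σ_{i=1}^B c_i. Then the function θ ↦ log g(θ) − log f(θ) is differentiable with gradient ∇(log g − log f)(θ) = (1/σ) Σ_{i=1}^B (μ'_i(θ) − μ_i(θ))·θ_i, where μ'_i(θ) = c_i K_σ(θ − θ_i) / Σ_{j=1}^B c_j K_σ(θ − θ_j) and μ_i(θ) = K_σ(θ − θ_i) / Σ_{j=1}^B K_σ(θ − θ_j). -/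
/-!
The kernel `K_σ(x − p)` has gradient `K_σ(x − p) (p − x) / σ`, so the log of any mixture
`a · ∑ᵢ wᵢ K_σ(x − θᵢ)` has gradient `(∑ᵢ μᵢ θᵢ − x) / σ`, where `μᵢ` are the normalized weights
`wᵢ K_σ(x − θᵢ) / ∑ⱼ wⱼ K_σ(x − θⱼ)`; the constant factor `a` drops out. Both `g` and `f` are such
mixtures, and in the difference of their log-gradients the `−x / σ` terms cancel.
-/

/-- The Gaussian kernel `K_σ(x) = (1/σ)·exp(−‖x‖²/(2σ))` on `ℝ^d` (equation (9)). -/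
noncomputable def gaussKernel {d : ℕ} (σ : ℝ) (x : EuclideanSpace ℝ (Fin d)) : ℝ :=
  (1 / σ) * Real.exp (-‖x‖ ^ 2 / (2 * σ))

section Gradient

variable {F : Type*} [NormedAddCommGroup F] [InnerProductSpace ℝ F] [CompleteSpace F]
  {f : F → ℝ} {f' x : F}

theorem HasGradientAt.const_mul (hf : HasGradientAt f f' x) (a : ℝ) :
    HasGradientAt (fun y => a * f y) (a • f') x := by
  rw [hasGradientAt_iff_hasFDerivAt, map_smul] at *
  exact hf.const_mul a

theorem HasGradientAt.sub {g : F → ℝ} {g' : F} (hf : HasGradientAt f f' x)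
    (hg : HasGradientAt g g' x) : HasGradientAt (fun y => f y - g y) (f' - g') x := by
  rw [hasGradientAt_iff_hasFDerivAt, map_sub] at *
  exact hf.sub hg

theorem HasGradientAt.fun_sum {ι : Type*} {s : Finset ι} {f : ι → F → ℝ} {f' : ι → F}
    (hf : ∀ i ∈ s, HasGradientAt (f i) (f' i) x) :
    HasGradientAt (fun y => ∑ i ∈ s, f i y) (∑ i ∈ s, f' i) x := by
  simp only [hasGradientAt_iff_hasFDerivAt, map_sum] at *
  exact HasFDerivAt.fun_sum hf

theorem HasGradientAt.log_const_mul (hf : HasGradientAt f f' x) {a : ℝ} (ha : a ≠ 0)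
    (hx : f x ≠ 0) : HasGradientAt (fun y => Real.log (a * f y)) ((f x)⁻¹ • f') x := by
  rw [hasGradientAt_iff_hasFDerivAt] at *
  refine ((hf.const_mul a).log (mul_ne_zero ha hx)).congr_fderiv ?_
  rw [map_smul, smul_smul, mul_inv, mul_comm a⁻¹, inv_mul_cancel_right₀ ha]

end Gradient

theorem Finset.sum_smul_sub_eq_of_sum_eq_one {ι R E : Type*} [Ring R] [AddCommGroup E]
    [Module R E] {s : Finset ι} {μ : ι → R} (hμ : ∑ i ∈ s, μ i = 1) (x : ι → E) (y : E) :
    ∑ i ∈ s, μ i • (x i - y) = ∑ i ∈ s, μ i • x i - y := by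
  rw [Finset.sum_congr rfl fun i _ => smul_sub (μ i) (x i) y, Finset.sum_sub_distrib,
    ← Finset.sum_smul, hμ, one_smul]

section GaussKernel

variable {d : ℕ}

theorem gaussKernel_pos {σ : ℝ} (hσ : 0 < σ) (x : EuclideanSpace ℝ (Fin d)) :
    0 < gaussKernel σ x := by
  unfold gaussKernel
  positivity

theorem hasGradientAt_gaussKernel_sub (σ : ℝ) (p θ : EuclideanSpace ℝ (Fin d)) :
    HasGradientAt (fun x => gaussKernel σ (x - p)) ((gaussKernel σ (θ - p) / σ) • (p - θ)) θ := by
  rw [hasGradientAt_iff_hasFDerivAt]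
  have hchain :=
    ((((hasFDerivAt_id θ).sub_const p).norm_sq.neg.mul_const (2 * σ)⁻¹).exp).const_mul (1 / σ)
  simp only [id, ← div_eq_mul_inv] at hchain
  refine hchain.congr_fderiv ?_
  ext w
  simp only [gaussKernel, one_div, mul_inv_rev, map_sub, map_smul, smul_neg, smul_eq_mul,
    nsmul_eq_mul, Nat.cast_ofNat, InnerProductSpace.toDual_apply_apply, ContinuousLinearMap.comp_id,
    Pi.neg_apply, neg_apply, smul_apply, sub_apply, coe_innerSL_apply]
  ring

theorem hasGradientAt_log_const_mul_sum_mul_gaussKernel {ι : Type*} [Fintype ι] (σ : ℝ)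
    (w : ι → ℝ) (p : ι → EuclideanSpace ℝ (Fin d)) {a : ℝ} (ha : a ≠ 0)
    (θ : EuclideanSpace ℝ (Fin d)) (hθ : ∑ j, w j * gaussKernel σ (θ - p j) ≠ 0) :
    HasGradientAt (fun x => Real.log (a * ∑ i, w i * gaussKernel σ (x - p i)))
      ((1 / σ) • (∑ i, (w i * gaussKernel σ (θ - p i) / ∑ j, w j * gaussKernel σ (θ - p j)) • p i
        - θ)) θ := by
  have hsum := HasGradientAt.fun_sum (s := Finset.univ) fun i _ =>
    (hasGradientAt_gaussKernel_sub σ (p i) θ).const_mul (w i)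
  have hweights : ∑ i, w i * gaussKernel σ (θ - p i) / ∑ j, w j * gaussKernel σ (θ - p j) = 1 := by
    rw [← Finset.sum_div, div_self hθ]
  convert hsum.log_const_mul ha hθ using 1
  rw [← Finset.sum_smul_sub_eq_of_sum_eq_one hweights, Finset.smul_sum, Finset.smul_sum]
  refine Finset.sum_congr rfl fun i _ => ?_
  simp only [smul_smul]
  congr 1
  ring

end GaussKernel

theorem conditional_kde_log_diff_hasGradientAt_general
    (d B : ℕ) (hB : 1 ≤ B) (σ : ℝ) (hσ : 0 < σ)
    (θs : Fin B → EuclideanSpace ℝ (Fin d))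
    (c : Fin B → ℝ) (hc : ∀ i, 0 < c i) :
    ∀ θ : EuclideanSpace ℝ (Fin d),
      HasGradientAt
        (fun θ' : EuclideanSpace ℝ (Fin d) =>
          Real.log ((∑ i, c i * gaussKernel σ (θ' - θs i)) / ∑ i, c i)
            - Real.log ((1 / (B : ℝ)) * ∑ i, gaussKernel σ (θ' - θs i)))
        ((1 / σ) • ∑ i,
          ((c i * gaussKernel σ (θ - θs i) / ∑ j, c j * gaussKernel σ (θ - θs j))
            - gaussKernel σ (θ - θs i) / ∑ j, gaussKernel σ (θ - θs j)) • θs i)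
        θ := by
  intro θ
  have : Nonempty (Fin B) := Fin.pos_iff_nonempty.mp hB
  have hK := fun i => gaussKernel_pos (d := d) hσ (θ - θs i)
  have hg := hasGradientAt_log_const_mul_sum_mul_gaussKernel σ c θs
    (inv_ne_zero (Finset.sum_pos (fun i _ => hc i) Finset.univ_nonempty).ne') θ
    (Finset.sum_pos (fun i _ => mul_pos (hc i) (hK i)) Finset.univ_nonempty).ne'
  have hf := hasGradientAt_log_const_mul_sum_mul_gaussKernel σ (fun _ => 1) θs
    (one_div_ne_zero (Nat.cast_ne_zero.mpr (by omega) : (B : ℝ) ≠ 0)) θ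
    (Finset.sum_pos (fun i _ => by simpa using hK i) Finset.univ_nonempty).ne'
  simp only [one_mul] at hf
  convert hg.sub hf using 1
  · simp only [div_eq_inv_mul]
  · rw [← smul_sub, sub_sub_sub_cancel_right, ← Finset.sum_sub_distrib]
    simp only [sub_smul]

/-- Equations (13)–(15): for the KDE `f θ = (1/B) ∑ᵢ K_σ(θ − θᵢ)` and the weighted
(conditional) estimate `g θ = ∑ᵢ cᵢ K_σ(θ − θᵢ) / ∑ᵢ cᵢ` with weights `cᵢ > 0`,
the function `log g − log f` is differentiable with gradient
`(1/σ) ∑ᵢ (μ'ᵢ(θ) − μᵢ(θ)) • θᵢ`, where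
`μ'ᵢ(θ) = cᵢ K_σ(θ − θᵢ) / ∑ⱼ cⱼ K_σ(θ − θⱼ)` and
`μᵢ(θ) = K_σ(θ − θᵢ) / ∑ⱼ K_σ(θ − θⱼ)`. -/
theorem conditional_kde_log_diff_hasGradientAt
    (d B : ℕ) (hd : 1 ≤ d) (hB : 1 ≤ B) (σ : ℝ) (hσ : 0 < σ)
    (θs : Fin B → EuclideanSpace ℝ (Fin d))
    (c : Fin B → ℝ) (hc : ∀ i, 0 < c i) :
    ∀ θ : EuclideanSpace ℝ (Fin d),
      HasGradientAt
        (fun θ' : EuclideanSpace ℝ (Fin d) =>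
          Real.log ((∑ i, c i * gaussKernel σ (θ' - θs i)) / ∑ i, c i)
            - Real.log ((1 / (B : ℝ)) * ∑ i, gaussKernel σ (θ' - θs i)))
        ((1 / σ) • ∑ i,
          ((c i * gaussKernel σ (θ - θs i) / ∑ j, c j * gaussKernel σ (θ - θs j))
            - gaussKernel σ (θ - θs i) / ∑ j, gaussKernel σ (θ - θs j)) • θs i)
        θ :=
  conditional_kde_log_diff_hasGradientAt_general d B hB σ hσ θs c hc
end

section
/- Let m ≥ 1, let F be an m×m real matrix such that Fⁿ → 0 as n → ∞ (entrywise), let L and ξ be linear functionals on ℝ^m, and let u : ℕ → (ℝ^m → ℝ) satisfy u(0)(σ) = L(σ) and u(n+1)(σ) = u(n)(F·σ) + ξ(σ) for all n and σ. Then for every σ ∈ ℝ^m, the sequence n ↦ u(n)((I − F)·σ) converges to ξ(σ). -/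
/-!
Unrolling the recurrence gives `u n σ = L (Fⁿ σ) + ∑_{k<n} ξ (Fᵏ σ)`. At `(I - F) σ` the sum
telescopes to `ξ σ - ξ (Fⁿ σ)`, and both `L (Fⁿ (I - F) σ)` and `ξ (Fⁿ σ)` tend to `0` since
`Fⁿ → 0` and linear functionals on `ℝ^m` are continuous.
-/

open Filter Topology Finset Matrix

theorem apply_eq_apply_iterate_add_sum {α β : Type*} [AddCommMonoid β] (f : α → α) (ξ : α → β)
    {u : ℕ → α → β} (hrec : ∀ n x, u (n + 1) x = u n (f x) + ξ x) (n : ℕ) (x : α) :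
    u n x = u 0 (f^[n] x) + ∑ k ∈ range n, ξ (f^[k] x) := by
  induction n generalizing x with
  | zero => simp
  | succ n ih =>
    rw [hrec, ih, sum_range_succ', Function.iterate_succ_apply, add_assoc]
    simp only [Function.iterate_succ_apply, Function.iterate_zero_apply]

namespace Module.End

variable {R M N : Type*} [Ring R] [AddCommGroup M] [Module R M] [AddCommGroup N] [Module R N]

theorem sum_map_pow_apply_sub_self (A : End R M) (ξ : M →ₗ[R] N) (n : ℕ) (x : M) :
    ∑ k ∈ range n, ξ ((A ^ k) (x - A x)) = ξ x - ξ ((A ^ n) x) := by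
  have step (k : ℕ) : ξ ((A ^ k) (x - A x)) = ξ ((A ^ k) x) - ξ ((A ^ (k + 1)) x) := by
    rw [map_sub, map_sub, pow_succ, mul_apply]
  simp only [step, sum_range_sub', pow_zero, one_apply]

variable [TopologicalSpace M] [TopologicalSpace N] [IsTopologicalAddGroup N]

theorem tendsto_apply_sub_self_of_recurrence (A : End R M)
    (hA : ∀ x, Tendsto (fun n ↦ (A ^ n) x) atTop (𝓝 0))
    (L ξ : M →ₗ[R] N) (hL : Continuous L) (hξ : Continuous ξ) {u : ℕ → M → N}
    (h0 : ∀ x, u 0 x = L x) (hrec : ∀ n x, u (n + 1) x = u n (A x) + ξ x) (x : M) :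
    Tendsto (fun n ↦ u n (x - A x)) atTop (𝓝 (ξ x)) := by
  have closed (n : ℕ) : u n (x - A x) = L ((A ^ n) (x - A x)) + (ξ x - ξ ((A ^ n) x)) := by
    rw [apply_eq_apply_iterate_add_sum A ξ hrec, h0]
    simp only [← pow_apply, sum_map_pow_apply_sub_self]
  have hL0 := (hL.tendsto 0).comp (hA (x - A x))
  have hξ0 := (hξ.tendsto 0).comp (hA x)
  rw [map_zero] at hL0 hξ0
  simpa only [closed, Function.comp_def, zero_add, sub_zero] using
    hL0.add (tendsto_const_nhds.sub hξ0)

end Module.End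

theorem Matrix.tendsto_pow_mulVec_zero {ι R : Type*} [Fintype ι] [DecidableEq ι] [Semiring R]
    [TopologicalSpace R] [IsTopologicalSemiring R]
    {F : Matrix ι ι R} (hF : ∀ i j, Tendsto (fun n ↦ (F ^ n) i j) atTop (𝓝 0)) (v : ι → R) :
    Tendsto (fun n ↦ (F ^ n) *ᵥ v) atTop (𝓝 0) := by
  have hpow : Tendsto (fun n ↦ F ^ n) atTop (𝓝 0) :=
    tendsto_pi_nhds.2 fun i ↦ tendsto_pi_nhds.2 fun j ↦ hF i j
  simpa [Function.comp_def] using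
    ((continuous_id.matrix_mulVec continuous_const).tendsto 0).comp hpow

theorem steady_state_limit_general
    (m : ℕ)
    (F : Matrix (Fin m) (Fin m) ℝ)
    (hF : ∀ i j, Tendsto (fun n : ℕ => (F ^ n) i j) atTop (nhds 0))
    (L ξ : (Fin m → ℝ) →ₗ[ℝ] ℝ)
    (u : ℕ → (Fin m → ℝ) → ℝ)
    (h0 : ∀ σ, u 0 σ = L σ)
    (hrec : ∀ n σ, u (n + 1) σ = u n (F.mulVec σ) + ξ σ) :
    ∀ σ : Fin m → ℝ,
      Tendsto (fun n : ℕ => u n ((1 - F).mulVec σ)) atTop (nhds (ξ σ)) := by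
  intro σ
  have hA (v : Fin m → ℝ) : Tendsto (fun n ↦ (toLin' F ^ n) v) atTop (𝓝 0) := by
    simpa only [← toLin'_pow, toLin'_apply] using tendsto_pow_mulVec_zero hF v
  simpa only [sub_mulVec, one_mulVec, toLin'_apply] using
    Module.End.tendsto_apply_sub_self_of_recurrence (toLin' F) hA L ξ
      L.continuous_of_finiteDimensional ξ.continuous_of_finiteDimensional h0 hrec σ

/-- Mean-square steady state, equation (49): if `Fⁿ → 0` entrywise and
`u 0 σ = L σ`, `u (n+1) σ = u n (F·σ) + ξ σ`, then for every `σ`,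
`u n ((I − F)·σ) → ξ σ` as `n → ∞`. -/
theorem steady_state_limit
    (m : ℕ) (hm : 1 ≤ m)
    (F : Matrix (Fin m) (Fin m) ℝ)
    (hF : ∀ i j, Tendsto (fun n : ℕ => (F ^ n) i j) atTop (nhds 0))
    (L ξ : (Fin m → ℝ) →ₗ[ℝ] ℝ)
    (u : ℕ → (Fin m → ℝ) → ℝ)
    (h0 : ∀ σ, u 0 σ = L σ)
    (hrec : ∀ n σ, u (n + 1) σ = u n (F.mulVec σ) + ξ σ) :
    ∀ σ : Fin m → ℝ,
      Tendsto (fun n : ℕ => u n ((1 - F).mulVec σ)) atTop (nhds (ξ σ)) :=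
  steady_state_limit_general m F hF L ξ u h0 hrec
end
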